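/- For every positive integer n: c_{n,1} = 2^{n-1}(n-2)+1, c_{n,2} = n(2^n(n-5)+4(n+1))/8, and c_{n,3} = n(n-1)(2^n(n-8)+4n(n-1)+16)/48, where c_{n,k} = Σ_{i=2k}^{n} ((n-i+1)/(n+1)) · (n+1)!/(k!·(i-2k)!·(n+k-i+1)!). -/

import Mathlib

open Finset

/-- `c n k = Σ_{i=2k}^{n} ((n-i+1)/(n+1)) · (n+1)!/(k!·(i-2k)!·(n+k-i+1)!)`. -/
noncomputable def c (n k : ℕ) : ℚ :=
  ∑ i ∈ Finset.Icc (2 * k) n,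
    ((n : ℚ) - (i : ℚ) + 1) / ((n : ℚ) + 1) * (Nat.factorial (n + 1) : ℚ) /
      ((Nat.factorial k : ℚ) * (Nat.factorial (i - 2 * k) : ℚ) *
        (Nat.factorial (n + k - i + 1) : ℚ))

/-!
Writing `n = m + 2k` and `i = 2k + j`, the summand of `c n k` becomes
`C(n, k) / (m + k + 1) · (m + 1 - j) · C(m + k + 1, j)` for `0 ≤ j ≤ m`. The weighted binomial sum
`Σ_{j ≤ N} (A - j) C(N, j) = A 2^N - N 2^(N-1)` over all `j ≤ N = m + k + 1` differs from the partial
sum over `j ≤ m` by only `k + 1` terms, which for `k ≤ 3` are explicit polynomials in `m`.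
-/

lemma sum_range_sub_mul_choose (A : ℚ) (N : ℕ) :
    ∑ j ∈ range (N + 1), (A - j) * N.choose j = A * 2 ^ N - N * 2 ^ N / 2 := by
  have hsum : ∑ j ∈ range (N + 1), (N.choose j : ℚ) = 2 ^ N := by
    exact_mod_cast Nat.sum_range_choose N
  have hmul : ∑ j ∈ range (N + 1), (j : ℚ) * N.choose j = N * 2 ^ N / 2 := by
    rcases N with _ | N
    · simp
    · rw [pow_succ, mul_div_assoc, mul_div_cancel_right₀ _ two_ne_zero]
      exact_mod_cast Nat.sum_range_mul_choose (N + 1)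
  simp only [sub_mul, sum_sub_distrib, ← mul_sum, hsum, hmul]

lemma sum_range_sub_mul_choose_add (m r : ℕ) :
    ∑ j ∈ range (m + 1), ((m : ℚ) + 1 - j) * (m + r).choose j =
      (m + 1) * 2 ^ (m + r) - (m + r) * 2 ^ (m + r) / 2 +
        ∑ t ∈ range r, (t : ℚ) * (m + r).choose (m + 1 + t) := by
  have h := sum_range_sub_mul_choose ((m : ℚ) + 1) (m + r)
  rw [show m + r + 1 = m + 1 + r by omega, sum_range_add] at h
  push_cast at h
  simp only [sub_add_cancel_left, neg_mul, sum_neg_distrib] at h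
  linear_combination h

lemma c_eq_zero_of_lt {n k : ℕ} (h : n < 2 * k) : c n k = 0 := by
  rw [c, Icc_eq_empty (by omega), sum_empty]

lemma c_add_two_mul (m k : ℕ) :
    c (m + 2 * k) k = (m + 2 * k).choose k / ((m : ℚ) + k + 1) *
      ∑ j ∈ range (m + 1), ((m : ℚ) + 1 - j) * (m + (k + 1)).choose j := by
  rw [c, ← Ico_add_one_right_eq_Icc, sum_Ico_eq_sum_range, mul_sum,
    show m + 2 * k + 1 - 2 * k = m + 1 by omega]
  refine sum_congr rfl fun j hj => ?_
  have hj : j ≤ m := Nat.lt_succ_iff.mp (mem_range.mp hj)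
  rw [show 2 * k + j - 2 * k = j by omega,
    show m + 2 * k + k - (2 * k + j) + 1 = m + k + 1 - j by omega,
    Nat.cast_choose ℚ (show k ≤ m + 2 * k by omega),
    Nat.cast_choose ℚ (show j ≤ m + (k + 1) by omega), ← add_assoc,
    show m + 2 * k - k = m + k by omega, Nat.factorial_succ (m + 2 * k),
    Nat.factorial_succ (m + k)]
  have := Nat.factorial_ne_zero
  push_cast
  field_simp
  ring

lemma c_one {n : ℕ} (hn : 1 ≤ n) : c n 1 = 2 ^ (n - 1) * ((n : ℚ) - 2) + 1 := by
  rcases lt_or_ge n 2 with h | h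
  · interval_cases n; norm_num [c_eq_zero_of_lt]
  obtain ⟨m, rfl⟩ : ∃ m, n = m + 2 * 1 := ⟨n - 2, by omega⟩
  rw [c_add_two_mul, sum_range_sub_mul_choose_add]
  simp only [sum_range_succ, sum_range_zero, Nat.choose_self, Nat.choose_succ_self_right,
    Nat.choose_one_right]
  push_cast
  field_simp
  ring

lemma c_two (n : ℕ) :
    c n 2 = (n : ℚ) * (2 ^ n * ((n : ℚ) - 5) + 4 * ((n : ℚ) + 1)) / 8 := by
  rcases lt_or_ge n 4 with h | h
  · interval_cases n <;> norm_num [c_eq_zero_of_lt]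
  obtain ⟨m, rfl⟩ : ∃ m, n = m + 2 * 2 := ⟨n - 4, by omega⟩
  rw [c_add_two_mul, sum_range_sub_mul_choose_add]
  simp only [sum_range_succ, sum_range_zero, Nat.choose_self, Nat.choose_succ_self_right]
  push_cast [Nat.cast_choose_two]
  field_simp
  ring

lemma c_three (n : ℕ) :
    c n 3 = (n : ℚ) * ((n : ℚ) - 1) *
      (2 ^ n * ((n : ℚ) - 8) + 4 * (n : ℚ) * ((n : ℚ) - 1) + 16) / 48 := by
  rcases lt_or_ge n 6 with h | h
  · interval_cases n <;> norm_num [c_eq_zero_of_lt]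
  obtain ⟨m, rfl⟩ : ∃ m, n = m + 2 * 3 := ⟨n - 6, by omega⟩
  have choose_three : ((m + 6).choose 3 : ℚ) = (m + 6) * (m + 5) * (m + 4) / 6 := by
    rw [Nat.choose_eq_descFactorial_div_factorial,
      Nat.cast_div (Nat.factorial_dvd_descFactorial _ _) (by positivity)]
    norm_num [Nat.descFactorial_succ, Nat.factorial]
    ring
  have choose_two : ((m + 4).choose (m + 2) : ℚ) = (m + 4) * (m + 3) / 2 := by
    rw [show m + 4 = m + 2 + 2 by ring, Nat.choose_symm_add, Nat.cast_choose_two]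
    push_cast
    ring
  rw [c_add_two_mul, sum_range_sub_mul_choose_add]
  simp only [sum_range_succ, sum_range_zero, Nat.choose_self, Nat.choose_succ_self_right]
  push_cast [choose_three, choose_two]
  field_simp
  ring

theorem stmt16 (n : ℕ) (hn : 1 ≤ n) :
    c n 1 = 2 ^ (n - 1) * ((n : ℚ) - 2) + 1 ∧
    c n 2 = (n : ℚ) * (2 ^ n * ((n : ℚ) - 5) + 4 * ((n : ℚ) + 1)) / 8 ∧
    c n 3 = (n : ℚ) * ((n : ℚ) - 1) *
      (2 ^ n * ((n : ℚ) - 8) + 4 * (n : ℚ) * ((n : ℚ) - 1) + 16) / 48 :=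
  ⟨c_one hn, c_two n, c_three n⟩
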